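/- Let ξ be the measure on ℝ^{k+1} defined by ξ(A) = λ_k({u ∈ ℝ^k_+ : (u, S_Δ(u)) ∈ A}) and let {τ_r}_{r∈ℝ} be the family of measures τ_r(A) = d_k^{-1} λ_{k−1}(π(A ∩ ℍ_r)). Then for every Borel-measurable nonnegative function ψ : ℝ^{k+1} → ℝ, ∫_{ℝ^{k+1}} ψ(u,r) dξ(u,r) = ∫_ℝ ( ∫_{ℝ^k} ψ(u,r) dτ_r(u) ) dλ(r). -/

import Mathlib

open MeasureTheory ENNReal Set

noncomputable section

def stepLen {k : ℕ} (t : Fin (k + 1) → ℝ) (i : Fin k) : ℝ :=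
  t i.succ - t i.castSucc

def Sdelta {k : ℕ} (t : Fin (k + 1) → ℝ) (u : Fin k → ℝ) : ℝ :=
  ∑ i, stepLen t i * u i

def Hset {k : ℕ} (t : Fin (k + 1) → ℝ) (r : ℝ) : Set (Fin k → ℝ) :=
  {v | (∀ i, 0 < v i) ∧ Sdelta t v = r}

def posOrthant (k : ℕ) : Set (Fin k → ℝ) :=
  {v | ∀ i, 0 < v i}

def projFirst {k : ℕ} (v : Fin k → ℝ) (i : Fin (k - 1)) : ℝ :=
  v (Fin.castLE (Nat.sub_le k 1) i)

def dLast {k : ℕ} (hk : 0 < k) (t : Fin (k + 1) → ℝ) : ℝ :=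
  stepLen t ⟨k - 1, Nat.sub_lt hk one_pos⟩

/-- The measure `ξ(A) = λ_k({u ∈ ℝ^k_+ : (u, S_Δ(u)) ∈ A})` on `ℝ^k × ℝ ≅ ℝ^{k+1}`. -/
def xiMeasure {k : ℕ} (t : Fin (k + 1) → ℝ) : Measure ((Fin k → ℝ) × ℝ) :=
  Measure.map (fun u => (u, Sdelta t u)) (volume.restrict (posOrthant k))

/-! Write `v ∈ ℝ^k` as `Fin.snoc w a`, so that `S_Δ v = c w + d_k a` where `c` is the `S_Δ` of the
first `k - 1` steps. By Fubini and the substitution `r = c w + d_k a` in the last coordinate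
(Jacobian `d_k⁻¹`), `∫ ψ dξ = ∫_r d_k⁻¹ ∫_w ψ(liftHset t r w, r)`, where `liftHset t r` solves
`S_Δ v = r` for the last coordinate. It inverts `π` on `ℍ_r`, which identifies the inner integral
with `∫ ψ(·, r) dτ_r`. -/

theorem lintegral_comp_const_add_mul {g : ℝ → ℝ≥0∞} (hg : Measurable g) (b : ℝ) {d : ℝ}
    (hd : d ≠ 0) :
    ∫⁻ a, g (b + d * a) = ENNReal.ofReal |d⁻¹| * ∫⁻ r, g r := by
  have := lintegral_map (hg.comp (measurable_const_add b)) (measurable_const_mul d)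
    (μ := volume)
  rw [Real.map_volume_mul_left hd, lintegral_smul_measure, smul_eq_mul] at this
  rw [← lintegral_add_left_eq_self g b]
  exact this.symm

theorem lintegral_prod_comp_shear {α : Type*} [MeasurableSpace α] (μ : Measure α) [SFinite μ]
    {f : α × ℝ → ℝ≥0∞} (hf : Measurable f) {c : α → ℝ} (hc : Measurable c) {d : ℝ}
    (hd : d ≠ 0) :
    ∫⁻ p, f (p.1, c p.1 + d * p.2) ∂μ.prod volume =
      ENNReal.ofReal |d⁻¹| * ∫⁻ p, f p ∂μ.prod volume := by
  have hshear : Measurable fun p : α × ℝ => f (p.1, c p.1 + d * p.2) := by fun_prop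
  rw [lintegral_prod _ hshear.aemeasurable, lintegral_prod _ hf.aemeasurable,
    ← lintegral_const_mul _ (hf.lintegral_prod_right' (ν := volume))]
  exact lintegral_congr fun x =>
    lintegral_comp_const_add_mul (hf.comp measurable_prodMk_left) (c x) hd

theorem volume_preserving_snoc (m : ℕ) :
    MeasurePreserving (fun p : (Fin m → ℝ) × ℝ => (Fin.snoc p.1 p.2 : Fin (m + 1) → ℝ)) := by
  convert (volume_preserving_piFinSuccAbove (fun _ : Fin (m + 1) => ℝ) (Fin.last m)).symm.comp
    (Measure.measurePreserving_swap (μ := (volume : Measure (Fin m → ℝ)))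
      (ν := (volume : Measure ℝ))) using 1
  · ext p : 1
    ext i
    simp [MeasurableEquiv.piFinSuccAbove_symm_apply]
  · exact Measure.volume_eq_prod _ _

theorem measurable_Sdelta {k : ℕ} (t : Fin (k + 1) → ℝ) : Measurable (Sdelta t) := by
  unfold Sdelta
  fun_prop

theorem measurableSet_posOrthant (k : ℕ) : MeasurableSet (posOrthant k) := by
  simp only [posOrthant, ofPred_forall]
  exact .iInter fun i => measurableSet_lt measurable_const (measurable_pi_apply i)

theorem lintegral_xiMeasure {k : ℕ} (t : Fin (k + 1) → ℝ) {F : (Fin k → ℝ) × ℝ → ℝ≥0∞}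
    (hF : Measurable F) :
    ∫⁻ p, F p ∂xiMeasure t = ∫⁻ v, (posOrthant k).indicator (fun v => F (v, Sdelta t v)) v := by
  have hgraph : Measurable fun u => (u, Sdelta t u) := measurable_id.prodMk (measurable_Sdelta t)
  rw [xiMeasure, lintegral_map hF hgraph,
    lintegral_indicator (measurableSet_posOrthant k)]

section LastCoordinate

variable {m : ℕ} (t : Fin (m + 1 + 1) → ℝ)

theorem Sdelta_snoc (w : Fin m → ℝ) (a : ℝ) :
    Sdelta t (Fin.snoc w a) = Sdelta (Fin.init t) w + stepLen t (Fin.last m) * a := by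
  simp [Sdelta, Fin.sum_univ_castSucc, stepLen, Fin.init]

def liftHset (r : ℝ) (w : Fin m → ℝ) : Fin (m + 1) → ℝ :=
  Fin.snoc w ((r - Sdelta (Fin.init t) w) / stepLen t (Fin.last m))

theorem measurable_liftHset : Measurable fun p : (Fin m → ℝ) × ℝ => liftHset t p.2 p.1 := by
  have hc : Measurable fun p : (Fin m → ℝ) × ℝ => Sdelta (Fin.init t) p.1 :=
    (measurable_Sdelta _).comp measurable_fst
  refine measurable_pi_lambda _ fun j => Fin.lastCases ?_ (fun i => ?_) j
  · simpa [liftHset] using (measurable_snd.sub hc).div_const _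
  · simp only [liftHset, Fin.snoc_castSucc]
    fun_prop

theorem measurable_liftHset_apply (r : ℝ) : Measurable (liftHset t r) :=
  (measurable_liftHset t).comp measurable_prodMk_right

variable {t} (hd : stepLen t (Fin.last m) ≠ 0)
include hd

theorem Sdelta_liftHset (r : ℝ) (w : Fin m → ℝ) : Sdelta t (liftHset t r w) = r := by
  rw [liftHset, Sdelta_snoc, mul_div_cancel₀ _ hd, add_sub_cancel]

theorem liftHset_Sdelta_snoc (w : Fin m → ℝ) (a : ℝ) :
    liftHset t (Sdelta t (Fin.snoc w a)) w = Fin.snoc w a := by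
  rw [liftHset, Sdelta_snoc, add_sub_cancel_left, mul_div_cancel_left₀ _ hd]

theorem image_projFirst_inter_Hset (r : ℝ) (A : Set (Fin (m + 1) → ℝ)) :
    projFirst '' (A ∩ Hset t r) = liftHset t r ⁻¹' (A ∩ posOrthant (m + 1)) := by
  ext w
  constructor
  · rintro ⟨v, ⟨hvA, hvpos, rfl⟩, rfl⟩
    obtain ⟨w, a, rfl⟩ : ∃ w a, v = Fin.snoc w a := ⟨_, _, (Fin.snoc_init_self v).symm⟩
    show liftHset t _ (Fin.init (Fin.snoc (α := fun _ => ℝ) w a)) ∈ A ∩ posOrthant (m + 1)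
    rw [Fin.init_snoc, liftHset_Sdelta_snoc hd]
    exact ⟨hvA, hvpos⟩
  · rintro ⟨hA, hpos⟩
    exact ⟨liftHset t r w, ⟨hA, hpos, Sdelta_liftHset hd r w⟩, Fin.init_snoc _ _⟩

end LastCoordinate

section Disintegration

variable {m : ℕ} {t : Fin (m + 1 + 1) → ℝ} (hd : 0 < stepLen t (Fin.last m))
include hd

theorem eq_smul_restrict_map_liftHset {τ : ℝ → Measure (Fin (m + 1) → ℝ)}
    (hτ : ∀ r A, MeasurableSet A →
      τ r A = ENNReal.ofReal (stepLen t (Fin.last m))⁻¹ * volume (projFirst '' (A ∩ Hset t r)))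
    (r : ℝ) :
    τ r = ENNReal.ofReal (stepLen t (Fin.last m))⁻¹ •
      (volume.map (liftHset t r)).restrict (posOrthant (m + 1)) := by
  ext A hA
  rw [hτ r A hA, image_projFirst_inter_Hset hd.ne', Measure.smul_apply, smul_eq_mul,
    Measure.restrict_apply hA,
    Measure.map_apply (measurable_liftHset_apply t r) (hA.inter (measurableSet_posOrthant _))]

theorem lintegral_xiMeasure_eq_lintegral_liftHset {F : (Fin (m + 1) → ℝ) × ℝ → ℝ≥0∞}
    (hF : Measurable F) :
    ∫⁻ p, F p ∂xiMeasure t = ∫⁻ r, ENNReal.ofReal (stepLen t (Fin.last m))⁻¹ *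
      ∫⁻ w, (posOrthant (m + 1)).indicator (fun v => F (v, r)) (liftHset t r w) := by
  set d := stepLen t (Fin.last m)
  -- `G (v, r)` unfolds to `(posOrthant (m + 1)).indicator (fun v => F (v, r)) v`
  set G : (Fin (m + 1) → ℝ) × ℝ → ℝ≥0∞ := (Prod.fst ⁻¹' posOrthant (m + 1)).indicator F
  have hG : Measurable G := hF.indicator (measurable_fst (measurableSet_posOrthant _))
  have hGlift : Measurable fun p : (Fin m → ℝ) × ℝ => G (liftHset t p.2 p.1, p.2) :=
    hG.comp ((measurable_liftHset t).prodMk measurable_snd)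
  calc ∫⁻ p, F p ∂xiMeasure t
      = ∫⁻ v, G (v, Sdelta t v) := lintegral_xiMeasure t hF
    _ = ∫⁻ p : (Fin m → ℝ) × ℝ, G (Fin.snoc p.1 p.2, Sdelta t (Fin.snoc p.1 p.2)) :=
        ((volume_preserving_snoc m).lintegral_comp
          (hG.comp (measurable_id.prodMk (measurable_Sdelta t)))).symm
    _ = ∫⁻ p : (Fin m → ℝ) × ℝ,
          G (liftHset t (Sdelta (Fin.init t) p.1 + d * p.2) p.1,
            Sdelta (Fin.init t) p.1 + d * p.2) :=
        lintegral_congr fun p => by rw [← Sdelta_snoc, liftHset_Sdelta_snoc hd.ne']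
    _ = ENNReal.ofReal d⁻¹ * ∫⁻ p : (Fin m → ℝ) × ℝ, G (liftHset t p.2 p.1, p.2) := by
        rw [Measure.volume_eq_prod, ← abs_of_pos (inv_pos.2 hd)]
        exact lintegral_prod_comp_shear _ hGlift (measurable_Sdelta _) hd.ne'
    _ = _ := by
        rw [Measure.volume_eq_prod, lintegral_prod_symm _ hGlift.aemeasurable,
          ← lintegral_const_mul _ hGlift.lintegral_prod_left']
        rfl

end Disintegration

theorem simple_random_densities_stmt4_general
    (k : ℕ) (hk : 0 < k) (t : Fin (k + 1) → ℝ) (ht : StrictMono t)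
    (τ : ℝ → Measure (Fin k → ℝ))
    (hτ : ∀ r : ℝ, ∀ A : Set (Fin k → ℝ), MeasurableSet A →
      τ r A = ENNReal.ofReal (dLast hk t)⁻¹ * volume (projFirst '' (A ∩ Hset t r)))
    (ψ : (Fin k → ℝ) × ℝ → ℝ) (hψ : Measurable ψ) :
    ∫⁻ p, ENNReal.ofReal (ψ p) ∂(xiMeasure t) =
      ∫⁻ r : ℝ, (∫⁻ u, ENNReal.ofReal (ψ (u, r)) ∂(τ r)) ∂volume := by
  obtain ⟨m, rfl⟩ := Nat.exists_eq_add_one_of_ne_zero hk.ne'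
  have hd : 0 < stepLen t (Fin.last m) := sub_pos.2 (ht Fin.castSucc_lt_succ)
  have hO := measurableSet_posOrthant (m + 1)
  rw [lintegral_xiMeasure_eq_lintegral_liftHset hd hψ.ennreal_ofReal]
  refine lintegral_congr fun r => ?_
  have hψr : Measurable fun u => ENNReal.ofReal (ψ (u, r)) := by fun_prop
  rw [eq_smul_restrict_map_liftHset hd hτ r, lintegral_smul_measure, smul_eq_mul,
    ← lintegral_indicator hO, lintegral_map (hψr.indicator hO) (measurable_liftHset_apply t r)]

/-- for every Borel-measurable nonnegative `ψ : ℝ^{k+1} → ℝ`,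
`∫ ψ dξ = ∫_ℝ (∫_{ℝ^k} ψ(u,r) dτ_r(u)) dλ(r)`, where `{τ_r}` is the family of
measures `τ_r(A) = d_k⁻¹ λ_{k-1}(π(A ∩ ℍ_r))`. -/
theorem simple_random_densities_stmt4
    (k : ℕ) (hk : 0 < k) (t : Fin (k + 1) → ℝ) (ht : StrictMono t)
    (τ : ℝ → Measure (Fin k → ℝ))
    (hτ : ∀ r : ℝ, ∀ A : Set (Fin k → ℝ), MeasurableSet A →
      τ r A = ENNReal.ofReal (dLast hk t)⁻¹ * volume (projFirst '' (A ∩ Hset t r)))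
    (ψ : (Fin k → ℝ) × ℝ → ℝ) (hψ : Measurable ψ) (hψ0 : ∀ p, 0 ≤ ψ p) :
    ∫⁻ p, ENNReal.ofReal (ψ p) ∂(xiMeasure t) =
      ∫⁻ r : ℝ, (∫⁻ u, ENNReal.ofReal (ψ (u, r)) ∂(τ r)) ∂volume :=
  simple_random_densities_stmt4_general k hk t ht τ hτ ψ hψ
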